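/- Suppose y^n ∈ X satisfies the optimality condition ∇H^n(y^n) − ∇F^n(u^n) + M(y^n − u^n) = 0, d^n = y^n − u^n ≠ 0, E^n is differentiable with continuous gradient, and δt < 2/(3L). Then for every α ∈ (0, 2/(3δt) − L) there exists λ̄ > 0 such that for all λ ∈ (0, λ̄], E^n(y^n + λ d^n) − E^n(y^n) ≤ −α λ ‖d^n‖²; in particular the Armijo-type line search at y^n along d^n is feasible. -/

import Mathlib

/-!
By the optimality condition, `∇Eⁿ(yⁿ) = ∇Fⁿ(uⁿ) - ∇Fⁿ(yⁿ) - M dⁿ = (f(yⁿ) - f(uⁿ)) - M dⁿ - (2/(3δt)) dⁿ`,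
so the Lipschitz bound on `f` and `M ≥ 0` give the slope estimate
`⟪∇Eⁿ(yⁿ), dⁿ⟫ ≤ (L - 2/(3δt)) ‖dⁿ‖² < -α ‖dⁿ‖²`. A strict bound on the directional derivative
persists for the difference quotients `(Eⁿ(yⁿ + λ dⁿ) - Eⁿ(yⁿ)) / λ` for all small `λ > 0`.
-/

open scoped RealInnerProductSpace Topology

open InnerProductSpace

section Gradient

variable {X : Type*} [NormedAddCommGroup X] [InnerProductSpace ℝ X] [CompleteSpace X]
  {φ ψ : X → ℝ} {g₁ g₂ x : X}

theorem HasGradientAt.sub (h₁ : HasGradientAt φ g₁ x) (h₂ : HasGradientAt ψ g₂ x) :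
    HasGradientAt (fun u => φ u - ψ u) (g₁ - g₂) x := by
  rw [hasGradientAt_iff_hasFDerivAt] at *
  rw [map_sub]
  exact h₁.sub h₂

theorem HasGradientAt.const_mul (c : ℝ) (h₁ : HasGradientAt φ g₁ x) :
    HasGradientAt (fun u => c * φ u) (c • g₁) x := by
  rw [hasGradientAt_iff_hasFDerivAt] at *
  rw [map_smulₛₗ, RCLike.conj_to_real]
  exact h₁.const_mul c

theorem hasGradientAt_norm_sub_sq (a x : X) :
    HasGradientAt (fun u => ‖u - a‖ ^ 2) ((2 : ℝ) • (x - a)) x := by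
  rw [hasGradientAt_iff_hasFDerivAt]
  refine ((hasFDerivAt_id x).sub_const a).norm_sq.congr_fderiv ?_
  ext v
  simp

theorem hasGradientAt_inner_sub_const (c a x : X) :
    HasGradientAt (fun u => ⟪c, u - a⟫) c x := by
  simp only [hasGradientAt_iff_hasFDerivAt, inner_sub_right]
  exact (toDual ℝ X c).hasFDerivAt.sub_const _

end Gradient

theorem real_inner_le_mul_norm_sq_of_norm_le {X : Type*} [NormedAddCommGroup X]
    [InnerProductSpace ℝ X] {a b : X} {L : ℝ} (h : ‖a‖ ≤ L * ‖b‖) : ⟪a, b⟫ ≤ L * ‖b‖ ^ 2 :=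
  calc ⟪a, b⟫ ≤ ‖a‖ * ‖b‖ := real_inner_le_norm a b
    _ ≤ L * ‖b‖ * ‖b‖ := by gcongr
    _ = L * ‖b‖ ^ 2 := by ring

theorem HasDerivAt.exists_sub_le_mul_of_lt {ψ : ℝ → ℝ} {s c x : ℝ} (hψ : HasDerivAt ψ s x)
    (hs : s < c) : ∃ ε > 0, ∀ t, 0 < t → t ≤ ε → ψ (x + t) - ψ x ≤ c * t := by
  have hslope : ∀ᶠ t in 𝓝[>] 0, t⁻¹ • (ψ (x + t) - ψ x) < c :=
    ((hasDerivAt_iff_tendsto_slope_zero.mp hψ).eventually_lt_const hs).filter_mono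
      (nhdsWithin_mono 0 fun t ht => ne_of_gt ht)
  obtain ⟨ε, hε, hsub⟩ := mem_nhdsGT_iff_exists_Ioc_subset.mp hslope
  refine ⟨ε, hε, fun t ht htε => ?_⟩
  have hlt : t⁻¹ * (ψ (x + t) - ψ x) < c := hsub ⟨ht, htε⟩
  rw [inv_mul_lt_iff₀ ht] at hlt
  linarith

theorem HasFDerivAt.exists_sub_le_mul_of_lt {E : Type*} [NormedAddCommGroup E] [NormedSpace ℝ E]
    {φ : E → ℝ} {φ' : E →L[ℝ] ℝ} {y d : E} {c : ℝ} (hφ : HasFDerivAt φ φ' y) (hc : φ' d < c) :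
    ∃ ε > 0, ∀ t, 0 < t → t ≤ ε → φ (y + t • d) - φ y ≤ c * t := by
  have hline : HasDerivAt (fun t : ℝ => φ (y + t • d)) (φ' d) 0 := by
    refine hφ.comp_hasDerivAt_of_eq 0 ?_ (by simp)
    simpa using ((hasDerivAt_id (0 : ℝ)).smul_const d).const_add y
  simpa using hline.exists_sub_le_mul_of_lt hc

theorem line_search_feasible_un_general
    {X : Type*} [NormedAddCommGroup X] [InnerProductSpace ℝ X] [FiniteDimensional ℝ X]
    (H : X → ℝ) (h : X → X) (hH : ∀ x : X, HasGradientAt H (h x) x)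
    (F : X → ℝ) (f : X → X) (hF : ∀ x : X, HasGradientAt F (f x) x)
    (L : ℝ) (hLip : ∀ x y : X, ‖f x - f y‖ ≤ L * ‖x - y‖)
    (δt : ℝ)
    (M : X →L[ℝ] X)
    (hMpsd : ∀ x : X, 0 ≤ ⟪M x, x⟫)
    (un unm1 : X)
    (Hn Fn En : X → ℝ)
    (hHn : ∀ u : X, Hn u = H u + (1 / δt) * ‖u - un‖ ^ 2)
    (hFn : ∀ u : X, Fn u = (1 / (3 * δt)) * ‖u - unm1‖ ^ 2 - F u
      - ⟪f un - f unm1, u - unm1⟫)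
    (hEn : ∀ u : X, En u = Hn u - Fn u)
    (yn : X)
    (hopt : gradient Hn yn - gradient Fn un + M (yn - un) = 0)
    (hd : yn - un ≠ 0) :
    ∀ α : ℝ, 0 < α → α < 2 / (3 * δt) - L →
      ∃ lamBar : ℝ, 0 < lamBar ∧ ∀ lam : ℝ, 0 < lam → lam ≤ lamBar →
        En (yn + lam • (yn - un)) - En yn ≤ -(α * lam * ‖yn - un‖ ^ 2) := by
  intro α _ hα
  set d := yn - un
  have hHn_diff : DifferentiableAt ℝ Hn yn := by
    rw [funext hHn]
    exact (hH yn).differentiableAt.add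
      (((differentiableAt_id.sub_const un).norm_sq ℝ).const_mul _)
  have hFn_grad : ∀ x, HasGradientAt Fn
      ((1 / (3 * δt)) • (2 : ℝ) • (x - unm1) - f x - (f un - f unm1)) x := fun x => by
    rw [funext hFn]
    exact (((hasGradientAt_norm_sub_sq unm1 x).const_mul _).sub (hF x)).sub
      (hasGradientAt_inner_sub_const _ _ x)
  have hHn_grad : gradient Hn yn = gradient Fn un - M d := by
    rw [← sub_eq_zero, ← hopt]; abel
  have hEn_grad : HasGradientAt En ((f yn - f un) - M d - (2 / (3 * δt)) • d) yn := by
    have hE := hHn_diff.hasGradientAt.sub (hFn_grad yn)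
    rw [hHn_grad, (hFn_grad un).gradient, ← funext hEn] at hE
    convert hE using 1
    module
  have hslope : ⟪(f yn - f un) - M d - (2 / (3 * δt)) • d, d⟫ < -(α * ‖d‖ ^ 2) := by
    rw [inner_sub_left, inner_sub_left, real_inner_smul_left, real_inner_self_eq_norm_sq]
    have hd_pos : 0 < ‖d‖ ^ 2 := pow_pos (norm_pos_iff.mpr hd) 2
    nlinarith [real_inner_le_mul_norm_sq_of_norm_le (hLip yn un), hMpsd d]
  obtain ⟨ε, hε, hdescent⟩ :=
    (hasGradientAt_iff_hasFDerivAt.mp hEn_grad).exists_sub_le_mul_of_lt hslope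
  exact ⟨ε, hε, fun lam hlam hlamε => (hdescent lam hlam hlamε).trans_eq (by ring)⟩

/-- Feasibility of the Armijo-type line search: if `yⁿ` satisfies the
optimality condition, `dⁿ = yⁿ - uⁿ ≠ 0`, `Eⁿ` is differentiable with continuous gradient,
and `δt < 2/(3L)`, then for every `α ∈ (0, 2/(3δt) - L)` there is `λ̄ > 0` such that
`Eⁿ(yⁿ + λ dⁿ) - Eⁿ(yⁿ) ≤ -α λ ‖dⁿ‖²` for all `λ ∈ (0, λ̄]`. -/
theorem line_search_feasible_un
    {X : Type*} [NormedAddCommGroup X] [InnerProductSpace ℝ X] [FiniteDimensional ℝ X]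
    (H : X → ℝ) (h : X → X) (hH : ∀ x : X, HasGradientAt H (h x) x)
    (hHconv : ConvexOn ℝ Set.univ H)
    (F : X → ℝ) (f : X → X) (hF : ∀ x : X, HasGradientAt F (f x) x)
    (L : ℝ) (hL : 0 < L) (hLip : ∀ x y : X, ‖f x - f y‖ ≤ L * ‖x - y‖)
    (δt : ℝ) (hδt : 0 < δt) (hδt2 : δt < 2 / (3 * L))
    (M : X →L[ℝ] X) (hMsym : ∀ x y : X, ⟪M x, y⟫ = ⟪x, M y⟫)
    (hMpsd : ∀ x : X, 0 ≤ ⟪M x, x⟫)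
    (un unm1 : X)
    (Hn Fn En : X → ℝ)
    (hHn : ∀ u : X, Hn u = H u + (1 / δt) * ‖u - un‖ ^ 2)
    (hFn : ∀ u : X, Fn u = (1 / (3 * δt)) * ‖u - unm1‖ ^ 2 - F u
      - ⟪f un - f unm1, u - unm1⟫)
    (hEn : ∀ u : X, En u = Hn u - Fn u)
    (hEdiff : Differentiable ℝ En) (hEcont : Continuous (gradient En))
    (yn : X)
    (hopt : gradient Hn yn - gradient Fn un + M (yn - un) = 0)
    (hd : yn - un ≠ 0) :
    ∀ α : ℝ, 0 < α → α < 2 / (3 * δt) - L →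
      ∃ lamBar : ℝ, 0 < lamBar ∧ ∀ lam : ℝ, 0 < lam → lam ≤ lamBar →
        En (yn + lam • (yn - un)) - En yn ≤ -(α * lam * ‖yn - un‖ ^ 2) :=
  line_search_feasible_un_general H h hH F f hF L hLip δt M hMpsd un unm1 Hn Fn En hHn hFn hEn yn
    hopt hd
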